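/- arXiv:1204.0997 — 11 statements merged into one kernel-verified Lean document; each statement's English description precedes it below -/
import Mathlib

section
/- Let M be a transition matrix on a finite nonempty type σ and let P be a stationary distribution for M. Let V ⊆ σ be a closed set of states, i.e. M i j = 0 whenever j ∈ V and i ∉ V (no edges leave V). Then every state j ∉ V that has an edge into V (i.e. M i j > 0 for some i ∈ V) satisfies P j = 0. -/
/-!
Sum the stationarity equations `(M P) i = 0` over the closed set `V`. This gives
`∑ k, P k * c k = 0`, where `c k = ∑ i ∈ V, M i k` is the rate from `k` into `V`.
Closedness makes `c k` the full column sum, hence `0`, for `k ∈ V`, and off-diagonal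
nonnegativity makes `c k ≥ 0` for `k ∉ V`; so every term `P k * c k` vanishes, and an
edge `j → V` gives `c j > 0`.
-/

open Finset

namespace Matrix

variable {ι : Type*}

theorem sum_mulVec_eq_sum_mul_sum_col [Fintype ι] (M : Matrix ι ι ℝ) (v : ι → ℝ)
    (s : Finset ι) :
    ∑ i ∈ s, M.mulVec v i = ∑ k, v k * ∑ i ∈ s, M i k := by
  simp only [mulVec, dotProduct, mul_sum]
  rw [sum_comm]
  simp only [mul_comm]

theorem sum_col_eq_zero_of_closed [Fintype ι] {M : Matrix ι ι ℝ} (hMcol : ∀ j, ∑ i, M i j = 0)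
    {s : Finset ι} (hclosed : ∀ i j, j ∈ s → i ∉ s → M i j = 0) {k : ι} (hk : k ∈ s) :
    ∑ i ∈ s, M i k = 0 := by
  rw [← hMcol k]
  exact sum_subset (subset_univ s) fun i _ hi ↦ hclosed i k hk hi

theorem sum_col_nonneg_of_not_mem {M : Matrix ι ι ℝ} (hMoff : ∀ i j, i ≠ j → 0 ≤ M i j)
    {s : Finset ι} {k : ι} (hk : k ∉ s) :
    0 ≤ ∑ i ∈ s, M i k :=
  sum_nonneg fun i hi ↦ hMoff i k (ne_of_mem_of_not_mem hi hk)

theorem mul_sum_col_eq_zero_of_closed [Fintype ι] {M : Matrix ι ι ℝ}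
    (hMoff : ∀ i j, i ≠ j → 0 ≤ M i j) (hMcol : ∀ j, ∑ i, M i j = 0)
    {P : ι → ℝ} (hPnonneg : ∀ i, 0 ≤ P i) (hPstat : M.mulVec P = 0)
    {s : Finset ι} (hclosed : ∀ i j, j ∈ s → i ∉ s → M i j = 0) (k : ι) :
    P k * ∑ i ∈ s, M i k = 0 := by
  have hterm_nonneg : ∀ k ∈ univ, 0 ≤ P k * ∑ i ∈ s, M i k := by
    intro k _
    by_cases hk : k ∈ s
    · rw [sum_col_eq_zero_of_closed hMcol hclosed hk, mul_zero]
    · exact mul_nonneg (hPnonneg k) (sum_col_nonneg_of_not_mem hMoff hk)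
  have htotal : ∑ k, P k * ∑ i ∈ s, M i k = 0 := by
    rw [← sum_mulVec_eq_sum_mul_sum_col, hPstat]
    exact sum_eq_zero fun _ _ ↦ rfl
  exact (sum_eq_zero_iff_of_nonneg hterm_nonneg).mp htotal k (mem_univ k)

end Matrix

theorem stationary_boundary_zero_general
    {σ : Type*} [Fintype σ]
    (M : Matrix σ σ ℝ)
    (hMoff : ∀ i j : σ, i ≠ j → 0 ≤ M i j)
    (hMcol : ∀ j : σ, ∑ i, M i j = 0)
    (P : σ → ℝ)
    (hPnonneg : ∀ i, 0 ≤ P i)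
    (hPstat : M.mulVec P = 0)
    (V : Set σ)
    (hVclosed : ∀ i j : σ, j ∈ V → i ∉ V → M i j = 0)
    (j : σ) (hj : j ∉ V) (hedge : ∃ i ∈ V, 0 < M i j) :
    P j = 0 := by
  classical
  set s : Finset σ := univ.filter (· ∈ V)
  have hmem : ∀ k, k ∈ s ↔ k ∈ V := fun k ↦ by simp [s]
  have hclosed : ∀ i k, k ∈ s → i ∉ s → M i k = 0 := by
    simpa only [hmem] using hVclosed
  have hrate_pos : 0 < ∑ i ∈ s, M i j := by
    obtain ⟨i₀, hi₀, hpos⟩ := hedge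
    exact sum_pos' (fun i hi ↦ hMoff i j (ne_of_mem_of_not_mem ((hmem i).mp hi) hj))
      ⟨i₀, (hmem i₀).mpr hi₀, hpos⟩
  exact (mul_eq_zero.mp (Matrix.mul_sum_col_eq_zero_of_closed hMoff hMcol hPnonneg hPstat
    hclosed j)).resolve_right hrate_pos.ne'

/-- Let `M` be a transition matrix on a finite nonempty type `σ` and let
`P` be a stationary distribution for `M`. Let `V ⊆ σ` be a closed set of states
(no edges leave `V`). Then every state `j ∉ V` having an edge into `V` satisfies `P j = 0`. -/
theorem stationary_boundary_zero
    {σ : Type*} [Fintype σ] [Nonempty σ] [DecidableEq σ]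
    (M : Matrix σ σ ℝ)
    (hMoff : ∀ i j : σ, i ≠ j → 0 ≤ M i j)
    (hMcol : ∀ j : σ, ∑ i, M i j = 0)
    (P : σ → ℝ)
    (hPnonneg : ∀ i, 0 ≤ P i) (hPsum : ∑ i, P i = 1)
    (hPstat : M.mulVec P = 0)
    (V : Set σ)
    (hVclosed : ∀ i j : σ, j ∈ V → i ∉ V → M i j = 0)
    (j : σ) (hj : j ∉ V) (hedge : ∃ i ∈ V, 0 < M i j) :
    P j = 0 :=
  stationary_boundary_zero_general M hMoff hMcol P hPnonneg hPstat V hVclosed j hj hedge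
end

section
/- Let M be a transition matrix on a finite nonempty type σ and let P be a stationary distribution for M. If a state i has P i = 0, then every state j with an edge j → i (i.e. j ≠ i and M i j > 0) also has P j = 0. -/
namespace Matrix

variable {σ R : Type*} [Fintype σ] [Semiring R] [PartialOrder R] [IsOrderedRing R]

/-- The diagonal entry `M i i` may be negative, but it meets `P i = 0`; every other term is `≥ 0`. -/
theorem mul_apply_eq_zero_of_mulVec_apply_eq_zero {M : Matrix σ σ R} {P : σ → R} {i : σ}
    (hM : ∀ k, k ≠ i → 0 ≤ M i k) (hP : ∀ k, 0 ≤ P k) (hPi : P i = 0)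
    (hMP : (M *ᵥ P) i = 0) (j : σ) : M i j * P j = 0 := by
  have hterms : ∀ k ∈ Finset.univ, 0 ≤ M i k * P k := by
    intro k _
    rcases eq_or_ne k i with rfl | hki
    · simp [hPi]
    · exact mul_nonneg (hM k hki) (hP k)
  exact (Finset.sum_eq_zero_iff_of_nonneg hterms).mp hMP j (Finset.mem_univ j)

end Matrix

theorem stationary_zero_propagates_upstream_general
    {σ : Type*} [Fintype σ]
    (M : Matrix σ σ ℝ)
    (hMoff : ∀ i j : σ, i ≠ j → 0 ≤ M i j)
    (P : σ → ℝ)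
    (hPnonneg : ∀ i, 0 ≤ P i)
    (hPstat : M.mulVec P = 0)
    (i : σ) (hPi : P i = 0)
    (j : σ) (hedge : 0 < M i j) :
    P j = 0 :=
  (mul_eq_zero.mp <| M.mul_apply_eq_zero_of_mulVec_apply_eq_zero (fun k hk => hMoff i k hk.symm)
    hPnonneg hPi (congrFun hPstat i) j).resolve_left hedge.ne'

/-- If a state `i` of a stationary distribution `P` has `P i = 0`, then every
state `j` with an edge `j → i` (i.e. `j ≠ i` and `M i j > 0`) also has `P j = 0`. -/
theorem stationary_zero_propagates_upstream
    {σ : Type*} [Fintype σ] [Nonempty σ] [DecidableEq σ]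
    (M : Matrix σ σ ℝ)
    (hMoff : ∀ i j : σ, i ≠ j → 0 ≤ M i j)
    (hMcol : ∀ j : σ, ∑ i, M i j = 0)
    (P : σ → ℝ)
    (hPnonneg : ∀ i, 0 ≤ P i) (hPsum : ∑ i, P i = 1)
    (hPstat : M.mulVec P = 0)
    (i : σ) (hPi : P i = 0)
    (j : σ) (hji : j ≠ i) (hedge : 0 < M i j) :
    P j = 0 :=
  stationary_zero_propagates_upstream_general M hMoff P hPnonneg hPstat i hPi j hedge
end

section
/- Let M be a transition matrix on a finite nonempty type σ and let P be a stationary distribution for M. Then the support of P is a union of strongly connected components of the transition graph having no outgoing edges; precisely: for every state i with P i > 0 and every state i' reachable from i in the transition graph, one has P i' > 0 and i is reachable from i'. -/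
/-!
Positivity spreads along edges: the row equation of `M *ᵥ P = 0` at a state `x` with `P x = 0`
is a sum of nonnegative terms `M x k * P k`, so it forces `P k = 0` whenever `k → x`.

For the way back, let `S` be the set of states that cannot reach `i`; no edge leaves `S`. Hence
every column of `M` indexed by `S` sums to zero over `S`, while the other columns have a
nonnegative sum over `S`. Summing the stationarity equations over `S` gives
`∑ k ∉ S, (∑ j ∈ S, M j k) * P k = 0`, so no state of positive mass outside `S` has an edge
into `S`. Along a path from `i` every state has positive mass and reaches `i`, so the next
state cannot lie in `S` either.
-/

namespace Matrix

variable {σ : Type*} [Fintype σ]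

def TransitionEdge (M : Matrix σ σ ℝ) (a b : σ) : Prop := a ≠ b ∧ 0 < M b a

variable {M : Matrix σ σ ℝ} {P : σ → ℝ}

theorem pos_of_transitionEdge_of_mulVec_eq_zero (hMoff : ∀ i j : σ, i ≠ j → 0 ≤ M i j)
    (hPnonneg : ∀ i, 0 ≤ P i) (hPstat : M *ᵥ P = 0) {j x : σ} (hPj : 0 < P j)
    (hjx : M.TransitionEdge j x) : 0 < P x := by
  refine (hPnonneg x).lt_of_ne fun hPx => ?_
  have hrow : ∑ k, M x k * P k = 0 := congrFun hPstat x
  have hterms_nonneg : ∀ k ∈ Finset.univ, 0 ≤ M x k * P k := by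
    intro k _
    by_cases hk : x = k
    · simp [← hk, ← hPx]
    · exact mul_nonneg (hMoff x k hk) (hPnonneg k)
  have hterm : M x j * P j = 0 :=
    (Finset.sum_eq_zero_iff_of_nonneg hterms_nonneg).mp hrow j (Finset.mem_univ j)
  exact (mul_pos hjx.2 hPj).ne' hterm

theorem sum_col_eq_zero_of_forall_transitionEdge_mem (hMoff : ∀ i j : σ, i ≠ j → 0 ≤ M i j)
    (hMcol : ∀ j : σ, ∑ i, M i j = 0) {S : Finset σ}
    (hS : ∀ a b, M.TransitionEdge a b → a ∈ S → b ∈ S) {k : σ} (hk : k ∈ S) :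
    ∑ j ∈ S, M j k = 0 := by
  rw [← hMcol k]
  refine Finset.sum_subset (Finset.subset_univ S) fun j _ hj => ?_
  have hjk : j ≠ k := fun h => hj (h ▸ hk)
  by_contra hM
  exact hj (hS k j ⟨hjk.symm, (hMoff j k hjk).lt_of_ne' hM⟩ hk)

theorem not_transitionEdge_into_of_forall_transitionEdge_mem
    (hMoff : ∀ i j : σ, i ≠ j → 0 ≤ M i j) (hMcol : ∀ j : σ, ∑ i, M i j = 0)
    (hPnonneg : ∀ i, 0 ≤ P i) (hPstat : M *ᵥ P = 0) {S : Finset σ}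
    (hS : ∀ a b, M.TransitionEdge a b → a ∈ S → b ∈ S) {k j : σ} (hk : k ∉ S)
    (hPk : 0 < P k) (hj : j ∈ S) : ¬ M.TransitionEdge k j := by
  intro hkj
  have hcol_nonneg : ∀ k ∉ S, ∀ j ∈ S, 0 ≤ M j k := fun k hk j hj =>
    hMoff j k fun h => hk (h ▸ hj)
  have hflow : ∑ k, (∑ j ∈ S, M j k) * P k = 0 := by
    simp_rw [Finset.sum_mul]
    rw [Finset.sum_comm]
    exact Finset.sum_eq_zero fun j _ => congrFun hPstat j
  have hflow_nonneg : ∀ k ∈ Finset.univ, 0 ≤ (∑ j ∈ S, M j k) * P k := by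
    intro k _
    by_cases hkS : k ∈ S
    · simp [sum_col_eq_zero_of_forall_transitionEdge_mem hMoff hMcol hS hkS]
    · exact mul_nonneg (Finset.sum_nonneg (hcol_nonneg k hkS)) (hPnonneg k)
  have hcol_pos : 0 < ∑ j ∈ S, M j k :=
    hkj.2.trans_le (Finset.single_le_sum (f := fun j => M j k) (hcol_nonneg k hk) hj)
  exact (mul_pos hcol_pos hPk).ne'
    ((Finset.sum_eq_zero_iff_of_nonneg hflow_nonneg).mp hflow k (Finset.mem_univ k))

end Matrix

theorem stationary_support_union_of_closed_scc_general
    {σ : Type*} [Fintype σ]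
    (M : Matrix σ σ ℝ)
    (hMoff : ∀ i j : σ, i ≠ j → 0 ≤ M i j)
    (hMcol : ∀ j : σ, ∑ i, M i j = 0)
    (P : σ → ℝ)
    (hPnonneg : ∀ i, 0 ≤ P i)
    (hPstat : M.mulVec P = 0)
    (i : σ) (hPi : 0 < P i)
    (i' : σ) (hreach : Relation.ReflTransGen (fun a b : σ => a ≠ b ∧ 0 < M b a) i i') :
    0 < P i' ∧ Relation.ReflTransGen (fun a b : σ => a ≠ b ∧ 0 < M b a) i' i := by
  classical
  let S : Finset σ := {x | ¬ Relation.ReflTransGen M.TransitionEdge x i}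
  have hS : ∀ a b, M.TransitionEdge a b → a ∈ S → b ∈ S := by
    intro a b hab ha
    exact Finset.mem_filter.mpr
      ⟨Finset.mem_univ b, fun hb => (Finset.mem_filter.mp ha).2 (hb.head hab)⟩
  induction hreach with
  | refl => exact ⟨hPi, .refl⟩
  | @tail b c _ hbc ih =>
    obtain ⟨hPb, hbi⟩ := ih
    refine ⟨Matrix.pos_of_transitionEdge_of_mulVec_eq_zero hMoff hPnonneg hPstat hPb hbc, ?_⟩
    by_contra hci
    exact Matrix.not_transitionEdge_into_of_forall_transitionEdge_mem hMoff hMcol hPnonneg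
      hPstat hS (fun hbS => (Finset.mem_filter.mp hbS).2 hbi) hPb
      (Finset.mem_filter.mpr ⟨Finset.mem_univ c, hci⟩) hbc

/-- The support of a stationary distribution is a union of strongly connected
components of the transition graph having no outgoing edges: for every state `i` with
`P i > 0` and every state `i'` reachable from `i`, one has `P i' > 0` and `i` is reachable
from `i'`.  The edge relation is `Edge j i ↔ j ≠ i ∧ 0 < M i j` and reachability is its
reflexive-transitive closure. -/
theorem stationary_support_union_of_closed_scc
    {σ : Type*} [Fintype σ] [Nonempty σ] [DecidableEq σ]
    (M : Matrix σ σ ℝ)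
    (hMoff : ∀ i j : σ, i ≠ j → 0 ≤ M i j)
    (hMcol : ∀ j : σ, ∑ i, M i j = 0)
    (P : σ → ℝ)
    (hPnonneg : ∀ i, 0 ≤ P i) (hPsum : ∑ i, P i = 1)
    (hPstat : M.mulVec P = 0)
    (i : σ) (hPi : 0 < P i)
    (i' : σ) (hreach : Relation.ReflTransGen (fun a b : σ => a ≠ b ∧ 0 < M b a) i i') :
    0 < P i' ∧ Relation.ReflTransGen (fun a b : σ => a ≠ b ∧ 0 < M b a) i' i :=
  stationary_support_union_of_closed_scc_general M hMoff hMcol P hPnonneg hPstat i hPi i' hreach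
end

section
/- Every transition matrix M on a finite nonempty type σ admits a stationary distribution, i.e. there exists a probability vector P with M.mulVec P = 0. -/
/-!
If no probability vector is annihilated by `M`, Hahn–Banach separates `0` from the compact convex
set `M(Δ)`, the image of the standard simplex, by a functional `y` with `y ᵥ* M` positive in every
coordinate. But at a coordinate `j` where `y` is maximal, the vanishing column sums give
`(y ᵥ* M) j = ∑ i, (y i - y j) * M i j`, a sum of nonpositive terms.
-/

namespace Matrix

/-- One direction of Ville's theorem of the alternative. -/
theorem exists_mem_stdSimplex_mulVec_eq_zero {m n : Type*} [Fintype m] [Fintype n]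
    (A : Matrix m n ℝ) (h : ∀ y : m → ℝ, ∃ j, (y ᵥ* A) j ≤ 0) :
    ∃ P ∈ stdSimplex ℝ n, A *ᵥ P = 0 := by
  classical
  by_contra! hA
  have hK : IsCompact (A.mulVecLin '' stdSimplex ℝ n) :=
    (isCompact_stdSimplex ℝ n).image A.mulVecLin.continuous_of_finiteDimensional
  obtain ⟨f, u, hf0, hfK⟩ := geometric_hahn_banach_point_closed
    ((convex_stdSimplex ℝ n).linear_image A.mulVecLin) hK.isClosed (x := 0)
    (by rintro ⟨P, hP, hAP⟩; exact hA P hP hAP)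
  set y : m → ℝ := fun i => f (Pi.single i 1)
  have hfA (j : n) : f (A *ᵥ Pi.single j 1) = (y ᵥ* A) j := by
    conv_lhs => rw [mulVec_single_one, ← Finset.univ_sum_single (A.col j), map_sum]
    refine Finset.sum_congr rfl fun i _ => ?_
    simpa [← Pi.single_smul', mul_comm] using map_smul f (A i j) (Pi.single i 1)
  obtain ⟨j, hj⟩ := h y
  have hpos : u < f (A *ᵥ Pi.single j 1) := hfK _ ⟨_, single_mem_stdSimplex ℝ j, rfl⟩
  linarith [hfA j, map_zero f]

theorem exists_vecMul_apply_nonpos {σ : Type*} [Fintype σ] [Nonempty σ] {M : Matrix σ σ ℝ}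
    (hoff : ∀ i j, i ≠ j → 0 ≤ M i j) (hcol : ∀ j, ∑ i, M i j = 0) (y : σ → ℝ) :
    ∃ j, (y ᵥ* M) j ≤ 0 := by
  obtain ⟨j, hj⟩ := Finite.exists_max y
  refine ⟨j, ?_⟩
  calc (y ᵥ* M) j = ∑ i, (y i - y j) * M i j := by
        simp only [vecMul, dotProduct, sub_mul, Finset.sum_sub_distrib, ← Finset.mul_sum, hcol,
          mul_zero, sub_zero]
    _ ≤ 0 := Finset.sum_nonpos fun i _ => by
        rcases eq_or_ne i j with rfl | hij
        · simp
        · exact mul_nonpos_of_nonpos_of_nonneg (sub_nonpos.2 (hj i)) (hoff i j hij)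

end Matrix

theorem exists_stationary_distribution_general
    {σ : Type*} [Fintype σ] [Nonempty σ]
    (M : Matrix σ σ ℝ)
    (hMoff : ∀ i j : σ, i ≠ j → 0 ≤ M i j)
    (hMcol : ∀ j : σ, ∑ i, M i j = 0) :
    ∃ P : σ → ℝ, (∀ i, 0 ≤ P i) ∧ (∑ i, P i = 1) ∧ M.mulVec P = 0 := by
  obtain ⟨P, ⟨hP_nonneg, hP_sum⟩, hMP⟩ :=
    M.exists_mem_stdSimplex_mulVec_eq_zero (Matrix.exists_vecMul_apply_nonpos hMoff hMcol)
  exact ⟨P, hP_nonneg, hP_sum, hMP⟩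

/-- Every transition matrix on a finite nonempty type admits a stationary
distribution. -/
theorem exists_stationary_distribution
    {σ : Type*} [Fintype σ] [Nonempty σ] [DecidableEq σ]
    (M : Matrix σ σ ℝ)
    (hMoff : ∀ i j : σ, i ≠ j → 0 ≤ M i j)
    (hMcol : ∀ j : σ, ∑ i, M i j = 0) :
    ∃ P : σ → ℝ, (∀ i, 0 ≤ P i) ∧ (∑ i, P i = 1) ∧ M.mulVec P = 0 :=
  exists_stationary_distribution_general M hMoff hMcol
end

section
/- Let M be an irreducible transition matrix on a finite nonempty type σ. Then there exists a stationary distribution P* for M such that for every probability vector P₀, the time averages (1/T) ∫_0^T (Matrix.exp ℝ (t • M)).mulVec P₀ dt converge to P* as T → ∞. -/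
/-!
Stationary distributions are unique: `M *ᵥ v = 0` implies `M *ᵥ |v| = 0`, because `M` is
nonnegative off the diagonal and its columns sum to zero. So `|v| + v` is a nonnegative stationary
vector, and such a vector vanishing at one state vanishes at every state that reaches it. By
irreducibility a stationary vector of total mass zero cannot change sign, hence is zero.

The time averages of `exp (t • M) *ᵥ P₀` stay in the (compact) standard simplex, and by the
fundamental theorem of calculus `M` maps the average over `[0, T]` to
`(exp (T • M) *ᵥ P₀ - P₀) / T → 0`. So every cluster point of the averages is a stationary
distribution, hence the unique one, and the averages converge to it.
-/

open Filter Topology NormedSpace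
open scoped Matrix

attribute [local instance] Matrix.linftyOpNormedRing Matrix.linftyOpNormedAlgebra

theorem Convex.inv_smul_intervalIntegral_mem {E : Type*} [NormedAddCommGroup E]
    [NormedSpace ℝ E] [CompleteSpace E] {s : Set E} (hs : Convex ℝ s) (hsc : IsClosed s)
    {f : ℝ → E} {a b : ℝ} (hab : a < b) (hf : IntervalIntegrable f MeasureTheory.volume a b)
    (hfs : ∀ t ∈ Set.Ioc a b, f t ∈ s) : (b - a)⁻¹ • ∫ t in a..b, f t ∈ s := by
  rw [← interval_average_eq, Set.uIoc_of_le hab.le]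
  refine hs.set_average_mem hsc ?_ ?_ ?_ hf.1
  · simpa using hab
  · simp
  · exact (MeasureTheory.ae_restrict_iff' measurableSet_Ioc).2 (.of_forall hfs)

namespace Matrix

variable {σ : Type*} [Fintype σ]

section Stationary

variable {M : Matrix σ σ ℝ}

theorem sum_mulVec_eq_zero (hMcol : ∀ j, ∑ i, M i j = 0) (v : σ → ℝ) :
    ∑ i, (M *ᵥ v) i = 0 := by
  simp only [mulVec, dotProduct]
  rw [Finset.sum_comm]
  simp [← Finset.sum_mul, hMcol]

theorem mulVec_abs_eq_zero (hMoff : ∀ i j, i ≠ j → 0 ≤ M i j) (hMcol : ∀ j, ∑ i, M i j = 0)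
    {v : σ → ℝ} (hv : M *ᵥ v = 0) : M *ᵥ |v| = 0 := by
  have hnonneg : ∀ i, 0 ≤ (M *ᵥ |v|) i := by
    intro i
    -- compare `|v|` with whichever of `v`, `-v` agrees with it at `i`
    obtain ⟨w, hw, hwi, hwle⟩ : ∃ w, M *ᵥ w = 0 ∧ w i = |v i| ∧ ∀ j, w j ≤ |v j| := by
      rcases abs_choice (v i) with h | h
      · exact ⟨v, hv, h.symm, fun j => le_abs_self _⟩
      · exact ⟨-v, by rw [mulVec_neg, hv, neg_zero], h.symm, fun j => neg_le_abs _⟩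
    calc 0 = (M *ᵥ w) i := by rw [hw]; rfl
      _ ≤ (M *ᵥ |v|) i := Finset.sum_le_sum fun j _ => by
        rcases eq_or_ne i j with rfl | hij
        · simp [hwi]
        · exact mul_le_mul_of_nonneg_left (hwle j) (hMoff i j hij)
  funext i
  exact (Finset.sum_eq_zero_iff_of_nonneg fun i _ => hnonneg i).1
    (sum_mulVec_eq_zero hMcol _) i (Finset.mem_univ i)

theorem pos_of_reflTransGen (hMoff : ∀ i j, i ≠ j → 0 ≤ M i j) {p : σ → ℝ}
    (hp : ∀ i, 0 ≤ p i) (hMp : M *ᵥ p = 0) {i j : σ}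
    (hij : Relation.ReflTransGen (fun a b : σ => a ≠ b ∧ 0 < M b a) i j) (hi : 0 < p i) :
    0 < p j := by
  induction hij with
  | refl => exact hi
  | @tail b c _ hbc ih =>
    by_contra! hc
    have hc0 : p c = 0 := le_antisymm hc (hp c)
    have hle : M c b * p b ≤ (M *ᵥ p) c :=
      Finset.single_le_sum (f := fun k => M c k * p k) (fun k _ => by
        rcases eq_or_ne c k with rfl | hck
        · simp [hc0]
        · exact mul_nonneg (hMoff c k hck) (hp k)) (Finset.mem_univ b)
    rw [hMp, Pi.zero_apply] at hle
    linarith [mul_pos hbc.2 ih]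

theorem eq_zero_of_mulVec_eq_zero_of_sum_eq_zero (hMoff : ∀ i j, i ≠ j → 0 ≤ M i j)
    (hMcol : ∀ j, ∑ i, M i j = 0)
    (hirr : ∀ i j, Relation.ReflTransGen (fun a b : σ => a ≠ b ∧ 0 < M b a) i j)
    {v : σ → ℝ} (hv : M *ᵥ v = 0) (hsum : ∑ i, v i = 0) : v = 0 := by
  have hp : M *ᵥ (|v| + v) = 0 := by
    rw [mulVec_add, mulVec_abs_eq_zero hMoff hMcol hv, hv, add_zero]
  have hp0 : ∀ i, 0 ≤ (|v| + v) i := fun i => neg_le_iff_add_nonneg'.1 (neg_abs_le (v i))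
  have hnonneg : ∀ i, 0 ≤ v i := by
    intro i
    by_contra! hi
    have hnonpos : ∀ j, v j ≤ 0 := by
      intro j
      by_contra! hj
      have hpi := pos_of_reflTransGen hMoff hp0 hp (hirr j i) (by simp [abs_of_pos hj, hj])
      simp [abs_of_neg hi] at hpi
    have hvi := (Finset.sum_eq_zero_iff_of_nonpos fun j _ => hnonpos j).1 hsum i (Finset.mem_univ i)
    linarith
  funext i
  exact (Finset.sum_eq_zero_iff_of_nonneg fun j _ => hnonneg j).1 hsum i (Finset.mem_univ i)

theorem eq_of_mem_stdSimplex_of_mulVec_eq_zero (hMoff : ∀ i j, i ≠ j → 0 ≤ M i j)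
    (hMcol : ∀ j, ∑ i, M i j = 0)
    (hirr : ∀ i j, Relation.ReflTransGen (fun a b : σ => a ≠ b ∧ 0 < M b a) i j)
    {P Q : σ → ℝ} (hP : P ∈ stdSimplex ℝ σ) (hQ : Q ∈ stdSimplex ℝ σ)
    (hMP : M *ᵥ P = 0) (hMQ : M *ᵥ Q = 0) : P = Q := by
  refine sub_eq_zero.1 (eq_zero_of_mulVec_eq_zero_of_sum_eq_zero hMoff hMcol hirr ?_ ?_)
  · rw [mulVec_sub, hMP, hMQ, sub_zero]
  · simp [Finset.sum_sub_distrib, hP.2, hQ.2]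

end Stationary

variable [DecidableEq σ]

theorem exp_apply_nonneg {A : Matrix σ σ ℝ} (hA : ∀ i j, 0 ≤ A i j) (i j : σ) :
    0 ≤ exp A i j := by
  rw [exp_eq_tsum ℝ]
  -- `Matrix` has no order instance; use the pointwise order of `σ → σ → ℝ`
  have h : ∀ n : ℕ, (0 : σ → σ → ℝ) ≤ ((n.factorial⁻¹ : ℝ) • A ^ n : Matrix σ σ ℝ) :=
    fun n i j => mul_nonneg (by positivity) (pow_apply_nonneg hA n i j)
  exact tsum_nonneg h i j

theorem exp_apply_nonneg_of_apply_nonneg_of_ne {A : Matrix σ σ ℝ}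
    (hA : ∀ i j, i ≠ j → 0 ≤ A i j) (i j : σ) : 0 ≤ exp A i j := by
  -- shifting by a large enough multiple of `1` makes `A` nonnegative
  set c : ℝ := ∑ k, |A k k|
  have hshift : ∀ i j, 0 ≤ (A + algebraMap ℝ _ c) i j := by
    intro i j
    rcases eq_or_ne i j with rfl | hij
    · have : |A i i| ≤ c :=
        Finset.single_le_sum (f := fun k => |A k k|) (fun k _ => abs_nonneg _) (Finset.mem_univ i)
      simp only [add_apply, algebraMap_matrix_apply, if_true, Algebra.algebraMap_self,
        RingHom.id_apply]
      linarith [neg_abs_le (A i i)]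
    · simpa [algebraMap_matrix_apply, hij] using hA i j hij
  have hexp : exp A = Real.exp (-c) • exp (A + algebraMap ℝ _ c) := calc
    exp A = exp (algebraMap ℝ _ (-c) + (A + algebraMap ℝ _ c)) := by rw [map_neg]; abel_nf
    _ = exp (algebraMap ℝ _ (-c)) * exp (A + algebraMap ℝ _ c) :=
      NormedSpace.exp_add_of_commute (Algebra.commute_algebraMap_left _ _)
    _ = Real.exp (-c) • exp (A + algebraMap ℝ _ c) := by
      rw [Algebra.smul_def, Real.exp_eq_exp_ℝ, algebraMap_exp_comm]
  rw [hexp, smul_apply, smul_eq_mul]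
  exact mul_nonneg (Real.exp_pos _).le (exp_apply_nonneg hshift i j)

theorem hasDerivAt_exp_smul_mulVec (M : Matrix σ σ ℝ) (v : σ → ℝ) (t : ℝ) :
    HasDerivAt (fun u : ℝ => exp (u • M) *ᵥ v) (M *ᵥ (exp (t • M) *ᵥ v)) t := by
  let L : Matrix σ σ ℝ →L[ℝ] σ → ℝ := LinearMap.toContinuousLinearMap ((mulVecBilin ℝ ℝ).flip v)
  rw [mulVec_mulVec]
  exact L.hasFDerivAt.comp_hasDerivAt t (hasDerivAt_exp_smul_const' M t)

theorem continuous_exp_smul_mulVec (M : Matrix σ σ ℝ) (v : σ → ℝ) :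
    Continuous fun t : ℝ => exp (t • M) *ᵥ v :=
  continuous_iff_continuousAt.2 fun t => (hasDerivAt_exp_smul_mulVec M v t).continuousAt

theorem mulVec_intervalIntegral_exp_smul_mulVec (M : Matrix σ σ ℝ) (v : σ → ℝ) (a b : ℝ) :
    M *ᵥ ∫ t in a..b, exp (t • M) *ᵥ v = exp (b • M) *ᵥ v - exp (a • M) *ᵥ v := by
  let L : (σ → ℝ) →L[ℝ] σ → ℝ := LinearMap.toContinuousLinearMap M.mulVecLin
  have hcont := continuous_exp_smul_mulVec M v
  rw [← intervalIntegral.integral_eq_sub_of_hasDerivAt (fun t _ => hasDerivAt_exp_smul_mulVec M v t)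
    ((L.continuous.comp hcont).intervalIntegrable a b)]
  exact (L.intervalIntegral_comp_comm (hcont.intervalIntegrable a b)).symm

section Evolution

variable {M : Matrix σ σ ℝ}

theorem sum_exp_smul_mulVec (hMcol : ∀ j, ∑ i, M i j = 0) (v : σ → ℝ) (t : ℝ) :
    ∑ i, (exp (t • M) *ᵥ v) i = ∑ i, v i := by
  have h := congrArg (fun w => ∑ i, w i) (mulVec_intervalIntegral_exp_smul_mulVec M v 0 t)
  simpa [sum_mulVec_eq_zero hMcol, Finset.sum_sub_distrib, sub_eq_zero, eq_comm] using h

theorem exp_smul_mulVec_mem_stdSimplex (hMoff : ∀ i j, i ≠ j → 0 ≤ M i j)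
    (hMcol : ∀ j, ∑ i, M i j = 0) {t : ℝ} (ht : 0 ≤ t) {v : σ → ℝ} (hv : v ∈ stdSimplex ℝ σ) :
    exp (t • M) *ᵥ v ∈ stdSimplex ℝ σ := by
  have hexp : ∀ i j, 0 ≤ exp (t • M) i j :=
    exp_apply_nonneg_of_apply_nonneg_of_ne fun i j hij => mul_nonneg ht (hMoff i j hij)
  exact ⟨fun i => Finset.sum_nonneg fun j _ => mul_nonneg (hexp i j) (hv.1 j),
    (sum_exp_smul_mulVec hMcol v t).trans hv.2⟩

variable (M) in
noncomputable def timeAverage (v : σ → ℝ) (T : ℝ) : σ → ℝ :=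
  (1 / T) • ∫ t in (0 : ℝ)..T, exp (t • M) *ᵥ v

theorem timeAverage_mem_stdSimplex (hMoff : ∀ i j, i ≠ j → 0 ≤ M i j)
    (hMcol : ∀ j, ∑ i, M i j = 0) {v : σ → ℝ} (hv : v ∈ stdSimplex ℝ σ) {T : ℝ} (hT : 0 < T) :
    timeAverage M v T ∈ stdSimplex ℝ σ := by
  simpa [timeAverage] using (convex_stdSimplex ℝ σ).inv_smul_intervalIntegral_mem
    (isClosed_stdSimplex ℝ σ) hT ((continuous_exp_smul_mulVec M v).intervalIntegrable 0 T)
    fun t ht => exp_smul_mulVec_mem_stdSimplex hMoff hMcol ht.1.le hv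

theorem tendsto_mulVec_timeAverage (hMoff : ∀ i j, i ≠ j → 0 ≤ M i j)
    (hMcol : ∀ j, ∑ i, M i j = 0) {v : σ → ℝ} (hv : v ∈ stdSimplex ℝ σ) :
    Tendsto (fun T => M *ᵥ timeAverage M v T) atTop (𝓝 0) := by
  obtain ⟨C, hC⟩ := isBounded_iff_forall_norm_le.1 (isCompact_stdSimplex ℝ σ).isBounded
  have hbdd : IsBoundedUnder (· ≤ ·) atTop fun T : ℝ => ‖exp (T • M) *ᵥ v - v‖ :=
    ⟨C + C, eventually_map.2 <| (eventually_ge_atTop 0).mono fun T hT => (norm_sub_le _ _).trans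
      (add_le_add (hC _ (exp_smul_mulVec_mem_stdSimplex hMoff hMcol hT hv)) (hC _ hv))⟩
  convert tendsto_inv_atTop_zero.zero_smul_isBoundedUnder_le hbdd using 2 with T
  simp [timeAverage, mulVec_smul, mulVec_intervalIntegral_exp_smul_mulVec]

theorem mulVec_eq_zero_of_mapClusterPt (hMoff : ∀ i j, i ≠ j → 0 ≤ M i j)
    (hMcol : ∀ j, ∑ i, M i j = 0) {v : σ → ℝ} (hv : v ∈ stdSimplex ℝ σ) {Q : σ → ℝ}
    (hQ : MapClusterPt Q atTop (timeAverage M v)) : M *ᵥ Q = 0 :=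
  have hcont : Continuous (M *ᵥ ·) := continuous_const.matrix_mulVec continuous_id
  eq_of_nhds_neBot (ClusterPt.mono (hQ.tendsto_comp (hcont.tendsto Q))
    (tendsto_mulVec_timeAverage hMoff hMcol hv)).neBot

end Evolution

end Matrix

open Matrix

/-- For an irreducible transition matrix `M`, there is a stationary
distribution `P*` such that for every initial probability vector `P₀` the time averages
`(1/T) ∫_0^T exp(t M) P₀ dt` converge to `P*` as `T → ∞`.
(In this Mathlib version the matrix exponential `Matrix.exp ℝ` is `NormedSpace.exp ℝ`.) -/
theorem time_average_tendsto_stationary_of_irreducible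
    {σ : Type*} [Fintype σ] [Nonempty σ] [DecidableEq σ]
    (M : Matrix σ σ ℝ)
    (hMoff : ∀ i j : σ, i ≠ j → 0 ≤ M i j)
    (hMcol : ∀ j : σ, ∑ i, M i j = 0)
    (hirr : ∀ i j : σ, Relation.ReflTransGen (fun a b : σ => a ≠ b ∧ 0 < M b a) i j) :
    ∃ Pstar : σ → ℝ, (∀ i, 0 ≤ Pstar i) ∧ (∑ i, Pstar i = 1) ∧ M.mulVec Pstar = 0 ∧
      ∀ P₀ : σ → ℝ, (∀ i, 0 ≤ P₀ i) → (∑ i, P₀ i = 1) →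
        Tendsto
          (fun T : ℝ => (1 / T) • ∫ t in (0:ℝ)..T, (NormedSpace.exp (t • M)).mulVec P₀)
          atTop (𝓝 Pstar) := by
  have hS := isCompact_stdSimplex ℝ σ
  have hev : ∀ v ∈ stdSimplex ℝ σ, ∀ᶠ T in atTop, timeAverage M v T ∈ stdSimplex ℝ σ :=
    fun v hv => (eventually_gt_atTop 0).mono fun T hT =>
      timeAverage_mem_stdSimplex hMoff hMcol hv hT
  obtain ⟨i⟩ := ‹Nonempty σ›
  have hδ := single_mem_stdSimplex ℝ i
  obtain ⟨P, hP, hPδ⟩ := hS.exists_mapClusterPt (tendsto_principal.2 (hev _ hδ))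
  have hMP := mulVec_eq_zero_of_mapClusterPt hMoff hMcol hδ hPδ
  refine ⟨P, hP.1, hP.2, hMP, fun P₀ h₀ h₁ => ?_⟩
  exact hS.tendsto_nhds_of_unique_mapClusterPt (hev P₀ ⟨h₀, h₁⟩) fun Q hQ hQP₀ =>
    eq_of_mem_stdSimplex_of_mulVec_eq_zero hMoff hMcol hirr hQ hP
      (mulVec_eq_zero_of_mapClusterPt hMoff hMcol ⟨h₀, h₁⟩ hQP₀) hMP
end

section
/- Let M be an irreducible transition matrix on a finite nonempty type σ and let P₀ be a probability vector. Then for every t > 0, every entry of (Matrix.exp ℝ (t • M)).mulVec P₀ is strictly positive. -/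
/-!
Since `t • M` has nonnegative off-diagonal entries, `A = t • M + c • 1` is entrywise nonnegative
for large `c`, and `exp (t • M) = e⁻ᶜ • exp A`. The exponential series of a nonnegative matrix
dominates each term `A ^ k / k!`, and `(A ^ k) i j > 0` as soon as there is a path of length `k`
from `j` to `i` in the transition graph, which irreducibility provides. Hence `exp (t • M)` is
entrywise positive, and maps a nonzero nonnegative vector to a positive one.
-/

open NormedSpace

namespace Matrix

variable {n : Type*} [Fintype n]

theorem mulVec_apply_pos {m R : Type*} [Semiring R] [PartialOrder R] [IsStrictOrderedRing R]
    {B : Matrix m n R} {v : n → R} {i : m} (hB : ∀ j, 0 < B i j) (hv : ∀ j, 0 ≤ v j) {j : n}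
    (hj : 0 < v j) : 0 < (B *ᵥ v) i :=
  Finset.sum_pos' (fun k _ => mul_nonneg (hB k).le (hv k))
    ⟨j, Finset.mem_univ j, mul_pos (hB j) hj⟩

variable [DecidableEq n]

theorem pow_apply_pos_of_reflTransGen {R : Type*} [Semiring R] [PartialOrder R]
    [IsStrictOrderedRing R] {A : Matrix n n R} (hA : ∀ i j, 0 ≤ A i j) {i j : n}
    (h : Relation.ReflTransGen (fun a b => 0 < A b a) i j) : ∃ k, 0 < (A ^ k) j i := by
  induction h with
  | refl => exact ⟨0, by simp⟩
  | @tail b c _ hbc ih =>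
    obtain ⟨k, hk⟩ := ih
    refine ⟨k + 1, ?_⟩
    rw [pow_succ', mul_apply]
    exact Finset.sum_pos' (fun l _ => mul_nonneg (hA c l) (pow_apply_nonneg hA k l i))
      ⟨b, Finset.mem_univ b, mul_pos hbc hk⟩

open scoped Norms.Operator in
theorem exp_apply_pos_of_pow_apply_pos {A : Matrix n n ℝ} (hA : ∀ i j, 0 ≤ A i j) {i j : n}
    {k : ℕ} (hk : 0 < (A ^ k) i j) : 0 < exp A i j := by
  have hsum : HasSum (fun m : ℕ => (m.factorial⁻¹ : ℝ) * (A ^ m) i j) (exp A i j) :=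
    Pi.hasSum.mp (Pi.hasSum.mp (exp_series_hasSum_exp' (𝕂 := ℝ) A) i) j
  calc 0 < (k.factorial⁻¹ : ℝ) * (A ^ k) i j := by positivity
    _ ≤ exp A i j := le_hasSum hsum k fun m _ => by have := pow_apply_nonneg hA m i j; positivity

open scoped Norms.Operator in
theorem exp_add_smul_one (A : Matrix n n ℝ) (c : ℝ) :
    exp (A + c • (1 : Matrix n n ℝ)) = Real.exp c • exp A := by
  have h := algebraMap_exp_comm (𝕂 := ℝ) (𝔸 := Matrix n n ℝ) c
  rw [Algebra.algebraMap_eq_smul_one, Algebra.algebraMap_eq_smul_one, ← Real.exp_eq_exp_ℝ] at h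
  rw [Matrix.exp_add_of_commute _ _ ((Commute.one_right A).smul_right c)]
  calc exp A * exp (c • 1) = exp A * (Real.exp c • 1) := congrArg _ h.symm
    _ = Real.exp c • exp A := mul_smul_one _ _

theorem exp_apply_pos_of_reflTransGen {M : Matrix n n ℝ} (hM : ∀ i j, i ≠ j → 0 ≤ M i j)
    {i j : n} (h : Relation.ReflTransGen (fun a b => a ≠ b ∧ 0 < M b a) j i) :
    0 < exp M i j := by
  obtain ⟨c, hc⟩ : ∃ c : ℝ, ∀ k, 0 ≤ M k k + c := ⟨∑ k, |M k k|, fun k => by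
    have := Finset.single_le_sum (fun k _ => abs_nonneg (M k k)) (Finset.mem_univ k)
    linarith [neg_abs_le (M k k)]⟩
  set A := M + c • (1 : Matrix n n ℝ)
  have hA_offDiag : ∀ a b, a ≠ b → A a b = M a b := fun a b hab => by simp [A, hab]
  have hA : ∀ a b, 0 ≤ A a b := fun a b => by
    rcases eq_or_ne a b with rfl | hab
    · simpa [A] using hc a
    · exact hA_offDiag a b hab ▸ hM a b hab
  have hpath : Relation.ReflTransGen (fun a b => 0 < A b a) j i :=
    .mono (fun a b (hab : a ≠ b ∧ 0 < M b a) => (hA_offDiag b a hab.1.symm).symm ▸ hab.2) _ _ h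
  obtain ⟨k, hk⟩ := pow_apply_pos_of_reflTransGen hA hpath
  have hMA : M = A + (-c) • (1 : Matrix n n ℝ) := by simp [A]
  rw [hMA, exp_add_smul_one, smul_apply, smul_eq_mul]
  exact mul_pos (Real.exp_pos _) (exp_apply_pos_of_pow_apply_pos hA hk)

end Matrix

theorem solution_pos_of_irreducible_general
    {σ : Type*} [Fintype σ] [DecidableEq σ]
    (M : Matrix σ σ ℝ)
    (hMoff : ∀ i j : σ, i ≠ j → 0 ≤ M i j)
    (hirr : ∀ i j : σ, Relation.ReflTransGen (fun a b : σ => a ≠ b ∧ 0 < M b a) i j)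
    (P₀ : σ → ℝ) (hP₀nonneg : ∀ i, 0 ≤ P₀ i) (hP₀sum : ∑ i, P₀ i = 1) :
    ∀ t : ℝ, 0 < t → ∀ i : σ, 0 < ((NormedSpace.exp (t • M)).mulVec P₀) i := by
  intro t ht i
  have htM : ∀ a b, a ≠ b → 0 ≤ (t • M) a b := fun a b hab =>
    mul_nonneg ht.le (hMoff a b hab)
  have hpath : ∀ j, Relation.ReflTransGen (fun a b => a ≠ b ∧ 0 < (t • M) b a) j i := fun j =>
    .mono (fun a b (hab : a ≠ b ∧ 0 < M b a) => ⟨hab.1, mul_pos ht hab.2⟩) _ _ (hirr j i)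
  have hexp : ∀ j, 0 < NormedSpace.exp (t • M) i j := fun j =>
    Matrix.exp_apply_pos_of_reflTransGen htM (hpath j)
  obtain ⟨j, -, hj⟩ : ∃ j ∈ Finset.univ, (0 : ℝ) < P₀ j :=
    Finset.exists_lt_of_sum_lt (by simp [hP₀sum])
  exact Matrix.mulVec_apply_pos hexp hP₀nonneg hj

/-- For an irreducible transition matrix `M` and a probability vector `P₀`,
every entry of `exp(t M) P₀` is strictly positive for every `t > 0`.
(In this Mathlib version the matrix exponential `Matrix.exp ℝ` is `NormedSpace.exp ℝ`.) -/
theorem solution_pos_of_irreducible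
    {σ : Type*} [Fintype σ] [Nonempty σ] [DecidableEq σ]
    (M : Matrix σ σ ℝ)
    (hMoff : ∀ i j : σ, i ≠ j → 0 ≤ M i j)
    (hMcol : ∀ j : σ, ∑ i, M i j = 0)
    (hirr : ∀ i j : σ, Relation.ReflTransGen (fun a b : σ => a ≠ b ∧ 0 < M b a) i j)
    (P₀ : σ → ℝ) (hP₀nonneg : ∀ i, 0 ≤ P₀ i) (hP₀sum : ∑ i, P₀ i = 1) :
    ∀ t : ℝ, 0 < t → ∀ i : σ, 0 < ((NormedSpace.exp (t • M)).mulVec P₀) i :=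
  solution_pos_of_irreducible_general M hMoff hirr P₀ hP₀nonneg hP₀sum
end

section
/- Let M be a transition matrix on a finite nonempty type σ. Then for every t ∈ ℝ and every j, the column sums of Matrix.exp ℝ (t • M) equal one: ∑ i, (Matrix.exp ℝ (t • M)) i j = 1. Consequently, for every probability vector P₀ the total mass ∑ i, ((Matrix.exp ℝ (t • M)).mulVec P₀) i = 1 is conserved in time. -/
/-!
The column sums of `A` form the row vector `1 ᵥ* A`, which vanishes for `A = t • M`. A left null
vector `v` of `A` makes the matrix `U` with all rows equal to `v` semiconjugate `A` to `0`, and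
semiconjugacy passes to the exponential: `U * exp A = exp 0 * U = U`, i.e. `v ᵥ* exp A = v`.
So `1 ᵥ* exp (t • M) = 1`, and a matrix whose columns sum to one preserves the total mass of any
vector.
-/

open NormedSpace Matrix

namespace Matrix

variable {m n R 𝔸 : Type*} [Fintype m]

theorem one_vecMul_apply [NonAssocSemiring R] (A : Matrix m n R) (j : n) :
    (1 ᵥ* A) j = ∑ i, A i j := by
  simp only [vecMul, dotProduct, Pi.one_apply, one_mul]

theorem sum_mulVec_of_one_vecMul_eq_one [Fintype n] [Semiring R] {A : Matrix m n R}
    (hA : 1 ᵥ* A = 1) (x : n → R) : ∑ i, (A *ᵥ x) i = ∑ i, x i := by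
  rw [← one_dotProduct, dotProduct_mulVec, hA, one_dotProduct]

theorem vecMul_exp_eq_self_of_vecMul_eq_zero [DecidableEq m] [NormedRing 𝔸] [NormedAlgebra ℚ 𝔸]
    [CompleteSpace 𝔸] {A : Matrix m m 𝔸} {v : m → 𝔸} (hv : v ᵥ* A = 0) : v ᵥ* exp A = v := by
  let : NormedRing (Matrix m m 𝔸) := Matrix.linftyOpNormedRing
  let : NormedAlgebra ℚ (Matrix m m 𝔸) := Matrix.linftyOpNormedAlgebra
  -- instance search does not see that the operator norm induces the product uniformity
  have : @CompleteSpace (Matrix m m 𝔸) PseudoMetricSpace.toUniformSpace :=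
    inferInstanceAs (CompleteSpace (m → m → 𝔸))
  have hsemiconj : SemiconjBy (replicateRow m v) A 0 := by
    rw [SemiconjBy, ← replicateRow_vecMul, hv, replicateRow_zero, zero_mul]
  have hfix := hsemiconj.exp_right
  rw [SemiconjBy, exp_zero, one_mul, ← replicateRow_vecMul] at hfix
  funext j
  exact congr_fun₂ hfix j j

end Matrix

theorem exp_colSum_one_and_mass_conserved_general
    {σ : Type*} [Fintype σ] [DecidableEq σ]
    (M : Matrix σ σ ℝ)
    (hMcol : ∀ j : σ, ∑ i, M i j = 0) :
    (∀ t : ℝ, ∀ j : σ, ∑ i, (NormedSpace.exp (t • M)) i j = 1) ∧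
    (∀ t : ℝ, ∀ P₀ : σ → ℝ, (∀ i, 0 ≤ P₀ i) → (∑ i, P₀ i = 1) →
      ∑ i, ((NormedSpace.exp (t • M)).mulVec P₀) i = 1) := by
  have hM : 1 ᵥ* M = 0 := funext fun j => by rw [one_vecMul_apply, hMcol j, Pi.zero_apply]
  have hexp (t : ℝ) : 1 ᵥ* exp (t • M) = 1 :=
    vecMul_exp_eq_self_of_vecMul_eq_zero (by rw [vecMul_smul, hM, smul_zero])
  refine ⟨fun t j => ?_, fun t P₀ _ hP₀ => ?_⟩
  · rw [← one_vecMul_apply, hexp t, Pi.one_apply]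
  · rw [sum_mulVec_of_one_vecMul_eq_one (hexp t), hP₀]

/-- For a transition matrix `M`, the column sums of `exp(t M)` are one for
every time `t`; consequently the total mass of `exp(t M) P₀` equals one for every
probability vector `P₀`.
(In this Mathlib version the matrix exponential `Matrix.exp ℝ` is `NormedSpace.exp ℝ`.) -/
theorem exp_colSum_one_and_mass_conserved
    {σ : Type*} [Fintype σ] [Nonempty σ] [DecidableEq σ]
    (M : Matrix σ σ ℝ)
    (hMoff : ∀ i j : σ, i ≠ j → 0 ≤ M i j)
    (hMcol : ∀ j : σ, ∑ i, M i j = 0) :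
    (∀ t : ℝ, ∀ j : σ, ∑ i, (NormedSpace.exp (t • M)) i j = 1) ∧
    (∀ t : ℝ, ∀ P₀ : σ → ℝ, (∀ i, 0 ≤ P₀ i) → (∑ i, P₀ i = 1) →
      ∑ i, ((NormedSpace.exp (t • M)).mulVec P₀) i = 1) :=
  exp_colSum_one_and_mass_conserved_general M hMcol
end

section
/- Let M be a transition matrix on a finite nonempty type σ. Then every complex eigenvalue λ of M (i.e. λ in the spectrum of the complexification M.map Complex.ofReal) satisfies Re λ ≤ 0. -/
/-!
If `Re μ > 0`, then `μ - M` is strictly diagonally dominant by columns: off the diagonal its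
entries are `-M i j ≤ 0`, and on it `‖μ - M k k‖ ≥ Re μ - M k k > -M k k = ∑_{i ≠ k} M i k`.
Hence `μ - M` is invertible, i.e. `μ` is not in the spectrum (column form of Gershgorin).
-/

namespace Matrix

theorem exists_norm_sub_diag_le_sum_col_of_mem_spectrum {K n : Type*} [NormedField K]
    [Fintype n] [DecidableEq n] {A : Matrix n n K} {μ : K} (hμ : μ ∈ spectrum K A) :
    ∃ k, ‖μ - A k k‖ ≤ ∑ i ∈ Finset.univ.erase k, ‖A i k‖ := by
  by_contra! h
  refine hμ ((isUnit_iff_isUnit_det _).2 (isUnit_iff_ne_zero.2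
    (det_ne_zero_of_sum_col_lt_diag fun k => ?_)))
  have hoff : ∀ i ∈ Finset.univ.erase k, ‖(algebraMap K (Matrix n n K) μ - A) i k‖ = ‖A i k‖ :=
    fun i hi => by
      simp [algebraMap_eq_diagonal, diagonal_apply_ne _ (Finset.ne_of_mem_erase hi)]
  have hdiag : (algebraMap K (Matrix n n K) μ - A) k k = μ - A k k := by
    simp [algebraMap_eq_diagonal]
  rw [Finset.sum_congr rfl hoff, hdiag]
  exact h k

theorem exists_re_le_re_diag_add_sum_col_of_mem_spectrum {n : Type*} [Fintype n]
    [DecidableEq n] {A : Matrix n n ℂ} {μ : ℂ} (hμ : μ ∈ spectrum ℂ A) :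
    ∃ k, μ.re ≤ (A k k).re + ∑ i ∈ Finset.univ.erase k, ‖A i k‖ := by
  obtain ⟨k, hk⟩ := exists_norm_sub_diag_le_sum_col_of_mem_spectrum hμ
  refine ⟨k, ?_⟩
  have hre : μ.re - (A k k).re ≤ ‖μ - A k k‖ := by
    simpa only [Complex.sub_re] using Complex.re_le_norm (μ - A k k)
  linarith

end Matrix

theorem transition_matrix_spectrum_re_nonpos_general
    {σ : Type*} [Fintype σ] [DecidableEq σ]
    (M : Matrix σ σ ℝ)
    (hMoff : ∀ i j : σ, i ≠ j → 0 ≤ M i j)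
    (hMcol : ∀ j : σ, ∑ i, M i j = 0) :
    ∀ μ ∈ spectrum ℂ (M.map Complex.ofReal), μ.re ≤ 0 := by
  intro μ hμ
  obtain ⟨k, hk⟩ := Matrix.exists_re_le_re_diag_add_sum_col_of_mem_spectrum hμ
  have hoff : ∑ i ∈ Finset.univ.erase k, ‖(M.map Complex.ofReal) i k‖
      = ∑ i ∈ Finset.univ.erase k, M i k :=
    Finset.sum_congr rfl fun i hi => by
      simp [abs_of_nonneg (hMoff i k (Finset.ne_of_mem_erase hi))]
  have hsplit := Finset.add_sum_erase Finset.univ (M · k) (Finset.mem_univ k)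
  rw [hoff, Matrix.map_apply, Complex.ofReal_re] at hk
  linarith [hMcol k]

/-- Every complex eigenvalue of a transition matrix (element of the
spectrum of its complexification) has nonpositive real part. -/
theorem transition_matrix_spectrum_re_nonpos
    {σ : Type*} [Fintype σ] [Nonempty σ] [DecidableEq σ]
    (M : Matrix σ σ ℝ)
    (hMoff : ∀ i j : σ, i ≠ j → 0 ≤ M i j)
    (hMcol : ∀ j : σ, ∑ i, M i j = 0) :
    ∀ μ ∈ spectrum ℂ (M.map Complex.ofReal), μ.re ≤ 0 :=
  transition_matrix_spectrum_re_nonpos_general M hMoff hMcol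
end

section
/- Let M be a transition matrix on a finite nonempty type σ. Then every nonzero complex eigenvalue λ of M (i.e. λ ≠ 0 in the spectrum of M.map Complex.ofReal) satisfies Re λ < 0; in particular M has no nonzero purely imaginary eigenvalue. -/
/-!
Gershgorin's theorem applied to the columns of `M`: every eigenvalue lies in a disc centred at
some diagonal entry `M k k ≤ 0` with radius `∑ i ≠ k, M i k = -M k k`. Such a disc touches the
imaginary axis only at the origin, so every nonzero eigenvalue has negative real part.
-/

open Finset Metric

namespace Matrix

variable {n : Type*} [Fintype n] [DecidableEq n]

theorem spectrum_transpose {R : Type*} [CommRing R] (A : Matrix n n R) :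
    spectrum R Aᵀ = spectrum R A := by
  ext μ
  have h : algebraMap R (Matrix n n R) μ - Aᵀ = (algebraMap R (Matrix n n R) μ - A)ᵀ := by
    rw [transpose_sub, algebraMap_eq_diagonal, diagonal_transpose]
  rw [spectrum.mem_iff, spectrum.mem_iff, h, isUnit_iff_isUnit_det, det_transpose,
    isUnit_iff_isUnit_det]

theorem exists_mem_closedBall_col_of_mem_spectrum {K : Type*} [NormedField K]
    {A : Matrix n n K} {μ : K} (hμ : μ ∈ spectrum K A) :
    ∃ k, μ ∈ closedBall (A k k) (∑ i ∈ univ.erase k, ‖A i k‖) := by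
  rw [← spectrum_transpose, ← spectrum_toLin', ← Module.End.hasEigenvalue_iff_mem_spectrum] at hμ
  exact eigenvalue_mem_ball hμ

end Matrix

theorem Complex.re_neg_of_mem_closedBall_neg {z : ℂ} {r : ℝ} (hz : z ∈ closedBall (r : ℂ) (-r))
    (hz0 : z ≠ 0) : z.re < 0 := by
  rw [mem_closedBall, Complex.dist_eq] at hz
  have hr : r ≤ 0 := neg_nonneg.mp ((norm_nonneg _).trans hz)
  have hsq : (z.re - r) ^ 2 + z.im ^ 2 ≤ r ^ 2 := by
    have := pow_le_pow_left₀ (norm_nonneg _) hz 2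
    rwa [Complex.sq_norm, Complex.normSq_apply, neg_sq, Complex.sub_re, Complex.sub_im,
      Complex.ofReal_re, Complex.ofReal_im, sub_zero, ← sq, ← sq] at this
  by_contra! hre
  have hre0 : z.re = 0 := by nlinarith [sq_nonneg z.im, mul_nonneg hre (neg_nonneg.mpr hr)]
  have him0 : z.im = 0 := by nlinarith
  exact hz0 (Complex.ext hre0 him0)

theorem transition_matrix_spectrum_re_neg_of_ne_zero_general
    {σ : Type*} [Fintype σ] [DecidableEq σ]
    (M : Matrix σ σ ℝ)
    (hMoff : ∀ i j : σ, i ≠ j → 0 ≤ M i j)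
    (hMcol : ∀ j : σ, ∑ i, M i j = 0) :
    ∀ μ ∈ spectrum ℂ (M.map Complex.ofReal), μ ≠ 0 → μ.re < 0 := by
  intro μ hμ hμ0
  obtain ⟨k, hk⟩ := Matrix.exists_mem_closedBall_col_of_mem_spectrum hμ
  have hradius : ∑ i ∈ univ.erase k, ‖M.map Complex.ofReal i k‖ = -M k k := by
    calc ∑ i ∈ univ.erase k, ‖M.map Complex.ofReal i k‖ = ∑ i ∈ univ.erase k, M i k :=
          sum_congr rfl fun i hi => by
            simp [abs_of_nonneg (hMoff i k (ne_of_mem_erase hi))]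
      _ = -M k k := by rw [sum_erase_eq_sub (mem_univ k), hMcol k, zero_sub]
  rw [hradius] at hk
  exact Complex.re_neg_of_mem_closedBall_neg hk hμ0

/-- Every nonzero complex eigenvalue of a transition matrix has strictly
negative real part; in particular a transition matrix has no nonzero purely imaginary
eigenvalue. -/
theorem transition_matrix_spectrum_re_neg_of_ne_zero
    {σ : Type*} [Fintype σ] [Nonempty σ] [DecidableEq σ]
    (M : Matrix σ σ ℝ)
    (hMoff : ∀ i j : σ, i ≠ j → 0 ≤ M i j)
    (hMcol : ∀ j : σ, ∑ i, M i j = 0) :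
    ∀ μ ∈ spectrum ℂ (M.map Complex.ofReal), μ ≠ 0 → μ.re < 0 :=
  transition_matrix_spectrum_re_neg_of_ne_zero_general M hMoff hMcol
end

section
/- Let M be a transition matrix on a finite nonempty type σ whose transition graph has no directed cycle, i.e. no state i is reachable from itself by a nonempty path of edges (the transitive closure of the edge relation is irreflexive). Then every complex eigenvalue of M (element of the spectrum of M.map Complex.ofReal) is real, i.e. has zero imaginary part. -/
/-!
Take an eigenvector `v` for `μ` and, using that an acyclic relation on a finite type is
well-founded, a coordinate `i` of its support with no edge `j → i` coming from the support.
Row `i` of `M v = μ v` then reads `M i i * v i = μ * v i`, so `μ = M i i` is real.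
-/

open Matrix

theorem Matrix.exists_mulVec_eq_smul_of_mem_spectrum {n K : Type*} [Fintype n] [DecidableEq n]
    [Field K] {A : Matrix n n K} {μ : K} (hμ : μ ∈ spectrum K A) :
    ∃ v ≠ 0, A *ᵥ v = μ • v := by
  rw [spectrum.mem_iff, isUnit_iff_isUnit_det, isUnit_iff_ne_zero, not_not,
    ← exists_mulVec_eq_zero_iff] at hμ
  obtain ⟨v, hv, hAv⟩ := hμ
  refine ⟨v, hv, ?_⟩
  rw [sub_mulVec, Algebra.algebraMap_eq_smul_one, smul_mulVec, one_mulVec, sub_eq_zero] at hAv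
  exact hAv.symm

theorem Relation.wellFounded_of_transGen_irrefl {α : Type*} [Finite α] {r : α → α → Prop}
    (h : ∀ a, ¬ Relation.TransGen r a a) : WellFounded r :=
  haveI : Std.Irrefl (Relation.TransGen r) := ⟨h⟩
  (Finite.wellFounded_of_trans_of_irrefl (Relation.TransGen r)).mono
    fun _ _ => Relation.TransGen.single

theorem Matrix.exists_eq_diag_of_mem_spectrum_of_acyclic {n K : Type*} [Fintype n] [DecidableEq n]
    [Field K] {A : Matrix n n K}
    (hacyclic : ∀ i, ¬ Relation.TransGen (fun a b : n => a ≠ b ∧ A b a ≠ 0) i i)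
    {μ : K} (hμ : μ ∈ spectrum K A) : ∃ i, μ = A i i := by
  obtain ⟨v, hv, hAv⟩ := exists_mulVec_eq_smul_of_mem_spectrum hμ
  obtain ⟨i, hvi, hmin⟩ := (Relation.wellFounded_of_transGen_irrefl hacyclic).has_min
    {j | v j ≠ 0} (Function.ne_iff.mp hv)
  refine ⟨i, mul_right_cancel₀ hvi ?_⟩
  have hrow : ∀ j ≠ i, A i j * v j = 0 := fun j hji => by
    by_contra h
    exact hmin j (right_ne_zero_of_mul h) ⟨hji, left_ne_zero_of_mul h⟩
  calc μ * v i = (A *ᵥ v) i := by rw [hAv, Pi.smul_apply, smul_eq_mul]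
    _ = A i i * v i := by
      rw [mulVec, dotProduct, Finset.sum_eq_single i (fun j _ hji => hrow j hji)
        (fun h => absurd (Finset.mem_univ i) h)]

theorem spectrum_real_of_acyclic_transition_graph_general
    {σ : Type*} [Fintype σ] [DecidableEq σ]
    (M : Matrix σ σ ℝ)
    (hMoff : ∀ i j : σ, i ≠ j → 0 ≤ M i j)
    (hacyclic : ∀ i : σ, ¬ Relation.TransGen (fun a b : σ => a ≠ b ∧ 0 < M b a) i i) :
    ∀ μ ∈ spectrum ℂ (M.map Complex.ofReal), μ.im = 0 := by
  intro μ hμ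
  have hedge : (fun a b : σ => a ≠ b ∧ M.map Complex.ofReal b a ≠ 0) =
      fun a b => a ≠ b ∧ 0 < M b a := by
    ext a b
    simp only [map_apply, ne_eq, Complex.ofReal_eq_zero, and_congr_right_iff]
    exact fun hab => ⟨fun h => lt_of_le_of_ne (hMoff b a (Ne.symm hab)) (Ne.symm h), ne_of_gt⟩
  obtain ⟨i, rfl⟩ := exists_eq_diag_of_mem_spectrum_of_acyclic (hedge ▸ hacyclic) hμ
  exact Complex.ofReal_im _

/-- If the transition graph of a transition matrix `M` has no directed
cycle (the transitive closure of the edge relation is irreflexive), then every complex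
eigenvalue of `M` is real, i.e. has zero imaginary part. -/
theorem spectrum_real_of_acyclic_transition_graph
    {σ : Type*} [Fintype σ] [Nonempty σ] [DecidableEq σ]
    (M : Matrix σ σ ℝ)
    (hMoff : ∀ i j : σ, i ≠ j → 0 ≤ M i j)
    (hMcol : ∀ j : σ, ∑ i, M i j = 0)
    (hacyclic : ∀ i : σ, ¬ Relation.TransGen (fun a b : σ => a ≠ b ∧ 0 < M b a) i i) :
    ∀ μ ∈ spectrum ℂ (M.map Complex.ofReal), μ.im = 0 :=
  spectrum_real_of_acyclic_transition_graph_general M hMoff hacyclic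
end

section
/- Let σ be a finite nonempty type and let E : σ → σ → Prop be a directed-graph edge relation (with E j i meaning an edge from j to i, only allowed for j ≠ i) that contains a directed cycle on at least three distinct vertices, i.e. there are pairwise distinct states s₀, s₁, …, s_{m−1} with m ≥ 3 and E s_k s_{k+1 mod m} for all k. Then there exists a transition matrix M on σ whose transition graph is contained in E (i.e. for i ≠ j, M i j > 0 implies E j i) and whose complexification M.map Complex.ofReal has at least one eigenvalue with nonzero imaginary part. -/
/-!
Take the generator of the walk `k ↦ k + 1` on `Fin m`, i.e. the cyclic shift minus the identity,
and transplant it along the injective cycle `s : Fin m → σ`, padding with zeros. Additive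
characters `ψ` are eigenvectors of translations, so `ψ (-1) - 1 = exp (-2πi/m) - 1` is an
eigenvalue; it is not real as soon as `m ≥ 3`. Conjugating by the partial permutation matrix of
`s` keeps this eigenvalue, the zero column sums and the sign pattern, and the only positive
off-diagonal entries sit at the edges `s k → s (k + 1)` of the cycle.
-/

open Finset Function

namespace Matrix

theorem mem_spectrum_of_mulVec_eq_smul {n R : Type*} [Fintype n] [DecidableEq n] [CommRing R]
    {A : Matrix n n R} {μ : R} {v : n → R} (hv : v ≠ 0) (hAv : A *ᵥ v = μ • v) :
    μ ∈ spectrum R A := by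
  rw [← spectrum_toLin']
  exact (Module.End.hasEigenvalue_of_hasEigenvector
    (Module.End.hasEigenvector_iff.mpr ⟨Module.End.mem_eigenspace_iff.mpr hAv, hv⟩)).mem_spectrum

section ExtendByZero

variable {ι σ R : Type*} [DecidableEq σ]

def inclusionMatrix [Zero R] [One R] (f : ι → σ) : Matrix ι σ R :=
  of fun k i => if f k = i then 1 else 0

theorem inclusionMatrix_mul_transpose [Fintype σ] [DecidableEq ι] [NonAssocSemiring R]
    {f : ι → σ} (hf : Injective f) :
    (inclusionMatrix f : Matrix ι σ R) * (inclusionMatrix f : Matrix ι σ R)ᵀ = 1 := by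
  ext k l
  simp [inclusionMatrix, Matrix.mul_apply, one_apply, hf.eq_iff]

variable [Fintype ι]

def extendByZero [NonAssocSemiring R] (f : ι → σ) (A : Matrix ι ι R) : Matrix σ σ R :=
  (inclusionMatrix f : Matrix ι σ R)ᵀ * A * (inclusionMatrix f : Matrix ι σ R)

section NonAssocSemiring

variable [NonAssocSemiring R] {f : ι → σ}

theorem extendByZero_apply (A : Matrix ι ι R) (i j : σ) :
    extendByZero f A i j = ∑ k, ∑ l, if f k = i ∧ f l = j then A k l else 0 := by
  simp only [extendByZero, inclusionMatrix, Matrix.mul_apply, transpose_apply, of_apply, sum_mul]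
  rw [sum_comm]
  refine sum_congr rfl fun k _ => sum_congr rfl fun l _ => ?_
  split_ifs <;> simp_all

theorem extendByZero_apply_apply (hf : Injective f) (A : Matrix ι ι R) (k l : ι) :
    extendByZero f A (f k) (f l) = A k l := by
  classical
  simp [extendByZero_apply, hf.eq_iff, ite_and]

theorem exists_eq_of_extendByZero_apply_ne_zero {A : Matrix ι ι R} {i j : σ}
    (h : extendByZero f A i j ≠ 0) : ∃ k l, f k = i ∧ f l = j := by
  rw [extendByZero_apply] at h
  obtain ⟨k, -, hk⟩ := exists_ne_zero_of_sum_ne_zero h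
  obtain ⟨l, -, hl⟩ := exists_ne_zero_of_sum_ne_zero hk
  exact ⟨k, l, (ite_ne_right_iff.mp hl).1⟩

theorem sum_extendByZero_apply [Fintype σ] {A : Matrix ι ι R} (hA : ∀ l, ∑ k, A k l = 0)
    (j : σ) : ∑ i, extendByZero f A i j = 0 :=
  calc ∑ i, extendByZero f A i j
      = ∑ i, ∑ k, ∑ l, if f k = i then (if f l = j then A k l else 0) else 0 := by
        simp only [extendByZero_apply, ite_and]
    _ = ∑ k, ∑ l, if f l = j then A k l else 0 := by
        rw [sum_comm]
        refine sum_congr rfl fun k _ => ?_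
        rw [sum_comm]
        simp
    _ = ∑ l, if f l = j then ∑ k, A k l else 0 := by
        rw [sum_comm]
        simp only [sum_ite_irrel, sum_const_zero]
    _ = 0 := by simp [hA]

theorem extendByZero_nonneg_of_ne [Preorder R] (hf : Injective f) {A : Matrix ι ι R}
    (hA : ∀ k l, k ≠ l → 0 ≤ A k l) {i j : σ} (hij : i ≠ j) : 0 ≤ extendByZero f A i j := by
  by_cases h : extendByZero f A i j = 0
  · exact h.ge
  obtain ⟨k, l, rfl, rfl⟩ := exists_eq_of_extendByZero_apply_ne_zero h
  rw [extendByZero_apply_apply hf]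
  exact hA k l (hf.ne_iff.mp hij)

theorem extendByZero_map {S : Type*} [NonAssocSemiring S] (φ : R →+* S) (A : Matrix ι ι R) :
    (extendByZero f A).map φ = extendByZero f (A.map φ) := by
  ext i j
  simp [extendByZero_apply, map_sum, apply_ite φ]

end NonAssocSemiring

theorem extendByZero_mem_spectrum [Fintype σ] [DecidableEq ι] [CommRing R] {f : ι → σ}
    (hf : Injective f) {A : Matrix ι ι R} {μ : R} {v : ι → R} (hv : v ≠ 0)
    (hAv : A *ᵥ v = μ • v) : μ ∈ spectrum R (extendByZero f A) := by
  set P : Matrix ι σ R := inclusionMatrix f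
  have hPv : P *ᵥ Pᵀ *ᵥ v = v := by
    rw [mulVec_mulVec, inclusionMatrix_mul_transpose hf, one_mulVec]
  refine mem_spectrum_of_mulVec_eq_smul (v := Pᵀ *ᵥ v) (fun h => hv ?_) ?_
  · rw [← hPv, h, mulVec_zero]
  · rw [extendByZero, ← mulVec_mulVec, ← mulVec_mulVec, hPv, hAv, mulVec_smul]

end ExtendByZero

section WalkGenerator

variable {G R : Type*} [AddGroup G] [DecidableEq G] (g : G)

def walkGenerator [Ring R] : Matrix G G R :=
  (Equiv.subRight g).toPEquiv.toMatrix - 1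

theorem walkGenerator_apply_of_ne [Ring R] {k l : G} (h : k ≠ l) :
    (walkGenerator g : Matrix G G R) k l = if k = l + g then 1 else 0 := by
  simp [walkGenerator, one_apply_ne h, eq_sub_iff_add_eq, eq_comm]

theorem walkGenerator_map [Ring R] {S : Type*} [Ring S] (φ : R →+* S) :
    (walkGenerator g : Matrix G G R).map φ = walkGenerator g := by
  simp [walkGenerator, Matrix.map_sub]

variable [Fintype G]

theorem sum_walkGenerator_apply [Ring R] (l : G) :
    ∑ k, (walkGenerator g : Matrix G G R) k l = 0 := by
  simp [walkGenerator, sub_apply, one_apply, sub_eq_iff_eq_add]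

theorem walkGenerator_mulVec_addChar [CommRing R] (ψ : AddChar G R) :
    walkGenerator g *ᵥ ⇑ψ = (ψ (-g) - 1) • ⇑ψ := by
  rw [walkGenerator, sub_mulVec, one_mulVec, PEquiv.toMatrix_toPEquiv_mulVec]
  ext k
  simp [sub_eq_add_neg, AddChar.map_add_eq_mul]
  ring

end WalkGenerator

end Matrix

open Real in
theorem ZMod.im_stdAddChar_neg_one_ne_zero {N : ℕ} [NeZero N] (hN : 3 ≤ N) :
    (stdAddChar (-1 : ZMod N)).im ≠ 0 := by
  have hN' : (3 : ℝ) ≤ N := by exact_mod_cast hN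
  have hpos : 0 < 2 * π / N := by positivity
  have hlt : 2 * π / N < π := by
    rw [div_lt_iff₀ (by positivity)]
    nlinarith [pi_pos]
  have hexp : stdAddChar (-1 : ZMod N) = Complex.exp ((-(2 * π / N) : ℝ) * Complex.I) := by
    have h := stdAddChar_coe (N := N) (-1)
    push_cast at h
    rw [h]
    congr 1
    push_cast
    ring
  rw [hexp, Complex.exp_ofReal_mul_I_im, sin_neg]
  exact neg_ne_zero.mpr (sin_pos_of_pos_of_lt_pi hpos hlt).ne'

open Matrix

theorem exists_transition_matrix_with_nonreal_eigenvalue_of_cycle_general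
    {σ : Type*} [Fintype σ] [DecidableEq σ]
    (E : σ → σ → Prop)
    (m : ℕ) [NeZero m] (hm : 3 ≤ m)
    (s : Fin m → σ) (hs : Function.Injective s)
    (hcyc : ∀ k : Fin m, E (s k) (s (k + 1))) :
    ∃ M : Matrix σ σ ℝ,
      (∀ i j : σ, i ≠ j → 0 ≤ M i j) ∧
      (∀ j : σ, ∑ i, M i j = 0) ∧
      (∀ i j : σ, i ≠ j → 0 < M i j → E j i) ∧
      ∃ μ ∈ spectrum ℂ (M.map Complex.ofReal), μ.im ≠ 0 := by
  set ψ : AddChar (Fin m) ℂ :=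
    ZMod.stdAddChar.compAddMonoidHom (ZMod.finEquiv m : Fin m →+ ZMod m)
  refine ⟨extendByZero s (walkGenerator 1), fun i j hij => ?_,
    sum_extendByZero_apply (sum_walkGenerator_apply 1), fun i j hij hpos => ?_, ψ (-1) - 1, ?_, ?_⟩
  · refine extendByZero_nonneg_of_ne hs (fun k l hkl => ?_) hij
    rw [walkGenerator_apply_of_ne 1 hkl]
    split_ifs <;> norm_num
  · obtain ⟨k, l, rfl, rfl⟩ := exists_eq_of_extendByZero_apply_ne_zero hpos.ne'
    rw [extendByZero_apply_apply hs, walkGenerator_apply_of_ne 1 (hs.ne_iff.mp hij)] at hpos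
    obtain rfl : k = l + 1 := by by_contra h; simp [h] at hpos
    exact hcyc l
  · rw [show Complex.ofReal = ⇑Complex.ofRealHom from rfl, extendByZero_map, walkGenerator_map]
    exact extendByZero_mem_spectrum hs ψ.coe_ne_zero (walkGenerator_mulVec_addChar 1 ψ)
  · simpa [ψ] using ZMod.im_stdAddChar_neg_one_ne_zero hm

/-- Let `E` be a directed-graph edge relation on a finite nonempty type
(edges only between distinct states) containing a directed cycle on `m ≥ 3` pairwise
distinct vertices. Then there is a transition matrix `M` whose transition graph is
contained in `E` and whose complexification has an eigenvalue with nonzero imaginary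
part. -/
theorem exists_transition_matrix_with_nonreal_eigenvalue_of_cycle
    {σ : Type*} [Fintype σ] [Nonempty σ] [DecidableEq σ]
    (E : σ → σ → Prop) (hE : ∀ j i : σ, E j i → j ≠ i)
    (m : ℕ) [NeZero m] (hm : 3 ≤ m)
    (s : Fin m → σ) (hs : Function.Injective s)
    (hcyc : ∀ k : Fin m, E (s k) (s (k + 1))) :
    ∃ M : Matrix σ σ ℝ,
      (∀ i j : σ, i ≠ j → 0 ≤ M i j) ∧
      (∀ j : σ, ∑ i, M i j = 0) ∧
      (∀ i j : σ, i ≠ j → 0 < M i j → E j i) ∧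
      ∃ μ ∈ spectrum ℂ (M.map Complex.ofReal), μ.im ≠ 0 :=
  exists_transition_matrix_with_nonreal_eigenvalue_of_cycle_general E m hm s hs hcyc
end
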